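/- The Petersen graph admits a (1+√(7/3), 2)-NZF: an orientation and an assignment φ : E → ℝ² satisfying Kirchhoff's law at every vertex, such that the Euclidean norm of each flow value is one of 1, √(4/3), √(7/3); in particular all norms lie in [1, √(7/3)]. -/

import Mathlib

open scoped BigOperators

noncomputable section

/-- The vector `(x, y)` in the Euclidean plane `ℝ²`. -/
def vec2 (x y : ℝ) : EuclideanSpace ℝ (Fin 2) := (WithLp.equiv 2 (Fin 2 → ℝ)).symm ![x, y]

/-- `f` is a `d`-dimensional nowhere-zero `r`-flow ((r,d)-NZF) on the graph `G`.
We encode an orientation together with a flow as a skew-symmetric function on ordered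
pairs of vertices, supported on adjacent pairs, whose values (on edges) have Euclidean
norm in `[1, r-1]`, and which satisfies Kirchhoff's law at every vertex. -/
def IsNZF {V : Type} [Fintype V] (G : SimpleGraph V) (d : ℕ) (r : ℝ)
    (f : V → V → EuclideanSpace ℝ (Fin d)) : Prop :=
  (∀ u v, f u v = - f v u) ∧
  (∀ u v, ¬ G.Adj u v → f u v = 0) ∧
  (∀ u v, G.Adj u v → 1 ≤ ‖f u v‖ ∧ ‖f u v‖ ≤ r - 1) ∧
  (∀ v, ∑ u, f v u = 0)

/-- `G` admits an `(r,d)`-NZF. -/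
def HasNZF {V : Type} [Fintype V] (G : SimpleGraph V) (d : ℕ) (r : ℝ) : Prop :=
  ∃ f, IsNZF G d r f

/-- A graph is bridgeless if none of its edges is a bridge. -/
def Bridgeless {V : Type} (G : SimpleGraph V) : Prop :=
  ∀ e ∈ G.edgeSet, ¬ G.IsBridge e

/-- The Petersen graph, presented as the Kneser graph `K(5,2)`: vertices are the
2-element subsets of a 5-element set, adjacent when disjoint. -/
def petersenGraph : SimpleGraph {s : Finset (Fin 5) // s.card = 2} :=
  SimpleGraph.fromRel (fun a b => Disjoint a.1 b.1)

/-!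
The flow takes values in the hexagonal lattice spanned by two vectors of length `1/√3` at
angle `π/3`: the point with coordinates `(a, b)` has squared length `(a² + ab + b²)/3`. The
lattice vectors on the circles of squared length `1`, `4/3`, `7/3` are those where this
Eisenstein norm form equals `3`, `4`, `7`, so it suffices to find an integral `ℤ²`-flow on the
Petersen graph whose edge values all have norm form in `{3, 4, 7}`, and such a flow can be
written down edge by edge.
-/

structure IsFlow {V A : Type} [Fintype V] [AddCommGroup A] (G : SimpleGraph V)
    (g : V → V → A) : Prop where
  skew : ∀ u v, g u v = -g v u
  eq_zero_of_not_adj : ∀ u v, ¬ G.Adj u v → g u v = 0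
  sum_eq_zero : ∀ v, ∑ u, g v u = 0

namespace IsFlow

variable {V : Type} [Fintype V] {G : SimpleGraph V}

theorem map {A B : Type} [AddCommGroup A] [AddCommGroup B] {g : V → V → A} (hg : IsFlow G g)
    (φ : A →+ B) : IsFlow G fun u v => φ (g u v) where
  skew u v := by rw [hg.skew u v, map_neg]
  eq_zero_of_not_adj u v h := by rw [hg.eq_zero_of_not_adj u v h, map_zero]
  sum_eq_zero v := by rw [← map_sum, hg.sum_eq_zero v, map_zero]

theorem isNZF {d : ℕ} {r : ℝ} {g : V → V → EuclideanSpace ℝ (Fin d)} (hg : IsFlow G g)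
    (hnorm : ∀ u v, G.Adj u v → 1 ≤ ‖g u v‖ ∧ ‖g u v‖ ≤ r - 1) : IsNZF G d r g :=
  ⟨hg.skew, hg.eq_zero_of_not_adj, hnorm, hg.sum_eq_zero⟩

end IsFlow

def eisensteinNorm (p : ℤ × ℤ) : ℤ := p.1 ^ 2 + p.1 * p.2 + p.2 ^ 2

def hexEmbedding : ℤ × ℤ →+ EuclideanSpace ℝ (Fin 2) :=
  AddMonoidHom.mk' (fun p => vec2 ((p.1 + p.2 / 2) / Real.sqrt 3) (p.2 / 2)) fun p q => by
    ext i
    fin_cases i <;>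
      simp only [vec2, Prod.fst_add, Prod.snd_add, Int.cast_add, WithLp.equiv_symm_apply,
        PiLp.add_apply, Fin.zero_eta, Fin.mk_one, Fin.isValue, Matrix.cons_val_zero,
        Matrix.cons_val_one, Matrix.cons_val_fin_one] <;>
      ring

theorem norm_vec2 (x y : ℝ) : ‖vec2 x y‖ = Real.sqrt (x ^ 2 + y ^ 2) := by
  simp [EuclideanSpace.norm_eq, vec2, Fin.sum_univ_two]

theorem norm_hexEmbedding (p : ℤ × ℤ) :
    ‖hexEmbedding p‖ = Real.sqrt (eisensteinNorm p / 3) := by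
  have h3 : Real.sqrt 3 ^ 2 = 3 := Real.sq_sqrt (by norm_num)
  simp only [hexEmbedding, AddMonoidHom.mk'_apply, norm_vec2, eisensteinNorm]
  congr 1
  rw [div_pow, h3]
  push_cast
  ring

/-- The flow determined by a list of oriented edges `(u, v, x)`, each carrying the value `x`
from `u` to `v`. -/
def flowOfEdges {α A : Type} [DecidableEq α] [AddCommGroup A] (L : List (α × α × A))
    (u v : α) : A :=
  (L.map fun e => if e.1 = u ∧ e.2.1 = v then e.2.2 else 0).sum -
    (L.map fun e => if e.1 = v ∧ e.2.1 = u then e.2.2 else 0).sum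

theorem flowOfEdges_skew {α A : Type} [DecidableEq α] [AddCommGroup A] (L : List (α × α × A))
    (u v : α) : flowOfEdges L u v = -flowOfEdges L v u :=
  (neg_sub _ _).symm

instance : DecidableRel petersenGraph.Adj :=
  inferInstanceAs (DecidableRel (SimpleGraph.fromRel _).Adj)

def petersenEdgeValues : List (Finset (Fin 5) × Finset (Fin 5) × (ℤ × ℤ)) :=
  [({0, 1}, {2, 3}, (-3, 1)), ({0, 1}, {2, 4}, (1, -2)), ({0, 1}, {3, 4}, (2, 1)),
   ({0, 2}, {1, 3}, (-2, 3)), ({0, 2}, {1, 4}, (2, -1)), ({0, 2}, {3, 4}, (0, -2)),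
   ({0, 3}, {1, 2}, (-1, -2)), ({0, 3}, {1, 4}, (-1, 2)), ({0, 3}, {2, 4}, (2, 0)),
   ({0, 4}, {1, 2}, (-1, 3)), ({0, 4}, {1, 3}, (-1, -1)), ({0, 4}, {2, 3}, (2, -2)),
   ({1, 2}, {3, 4}, (-2, 1)), ({1, 3}, {2, 4}, (-3, 2)), ({1, 4}, {2, 3}, (1, 1))]

def petersenIntFlow (u v : {s : Finset (Fin 5) // s.card = 2}) : ℤ × ℤ :=
  flowOfEdges petersenEdgeValues u.1 v.1

theorem isFlow_petersenIntFlow : IsFlow petersenGraph petersenIntFlow where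
  skew u v := flowOfEdges_skew _ _ _
  eq_zero_of_not_adj := by decide
  sum_eq_zero := by decide

theorem eisensteinNorm_petersenIntFlow : ∀ u v, petersenGraph.Adj u v →
    eisensteinNorm (petersenIntFlow u v) ∈ ({3, 4, 7} : Finset ℤ) := by
  decide

theorem sqrt_div_three_mem {n : ℤ} (hn : n ∈ ({3, 4, 7} : Finset ℤ)) :
    Real.sqrt (n / 3) ∈ ({1, Real.sqrt (4/3), Real.sqrt (7/3)} : Set ℝ) := by
  simp only [Finset.mem_insert, Finset.mem_singleton] at hn
  rcases hn with rfl | rfl | rfl <;> norm_num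

theorem one_le_and_le_sqrt_seven_thirds {x : ℝ}
    (hx : x ∈ ({1, Real.sqrt (4/3), Real.sqrt (7/3)} : Set ℝ)) :
    1 ≤ x ∧ x ≤ Real.sqrt (7/3) := by
  have one_le (y : ℝ) (hy : 1 ≤ y) : 1 ≤ Real.sqrt y := Real.one_le_sqrt.mpr hy
  rcases hx with rfl | rfl | rfl
  · exact ⟨le_rfl, one_le _ (by norm_num)⟩
  · exact ⟨one_le _ (by norm_num), Real.sqrt_le_sqrt (by norm_num)⟩
  · exact ⟨one_le _ (by norm_num), le_rfl⟩

/-- The Petersen graph admits a `(1+√(7/3), 2)`-NZF in which the norm of every flow value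
is one of `1`, `√(4/3)`, `√(7/3)`; in particular all norms lie in `[1, √(7/3)]`. -/
theorem stmt_14 :
    ∃ f, IsNZF petersenGraph 2 (1 + Real.sqrt (7/3)) f ∧
      ∀ u v, petersenGraph.Adj u v →
        ‖f u v‖ ∈ ({1, Real.sqrt (4/3), Real.sqrt (7/3)} : Set ℝ) := by
  have norm_mem (u v) (h : petersenGraph.Adj u v) : ‖hexEmbedding (petersenIntFlow u v)‖ ∈
      ({1, Real.sqrt (4/3), Real.sqrt (7/3)} : Set ℝ) := by
    rw [norm_hexEmbedding]
    exact sqrt_div_three_mem (eisensteinNorm_petersenIntFlow u v h)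
  refine ⟨_, (isFlow_petersenIntFlow.map hexEmbedding).isNZF fun u v h => ?_, norm_mem⟩
  rw [add_sub_cancel_left]
  exact one_le_and_le_sqrt_seven_thirds (norm_mem u v h)
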